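/- Let w ∈ αΣ* ∩ Σ*‾α be a non-α-crossing (m,n)-word with m, n ≥ 2, with α-prefixes u₀ <_p ⋯ <_p u_{m−1}, and let 1 ≤ i < j < m. If u_i is a suffix of u_j, then H*_α(w‾u_j) ⊆ H*_α(w‾u_i); if u_i is not a suffix of u_j, then H*_α(w‾u_i) ∩ H*_α(w‾u_j) = ∅. -/

import Mathlib

/-!
A hairpin completion step keeps a word non-`α`-crossing: an `α` reaching into the appended
`‾γ` would be mirrored to an `‾α` to the left of the `α` that follows `γ`. So every word of
`H*_α(w‾u)` is non-crossing and contains `w‾u` as a factor. In a non-crossing word the factor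
`w` occurs only once (the leftmost `‾α` of one copy would reappear further left in the other),
so a common word of `H*_α(w‾u_i)` and `H*_α(w‾u_j)` makes `‾u_i` a prefix of `‾u_j`.
If instead `u_j = t u_i`, then `w‾u_j` is the right hairpin completion of `w‾u_i` with
`γ = t`, provided the `α` following `t` ends before the final `‾α`. Otherwise `u_iα` at `|t|`
and the final `‾α` overlap in at least `|u_i|` letters, so `w` is `|u_i|`-periodic from `|t|`
on; the leftmost `‾α` of `w`, which lies right of the `α` at `|u_j|`, could then be shifted
further left.
-/

open List

namespace Hairpin

variable {S : Type} [DecidableEq S]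

/-- Antimorphic extension of an involution to words. -/
def comp (bar : S → S) (w : List S) : List S := (w.map bar).reverse

/-- Right hairpin completion w.r.t. primer `a`. -/
def RH (bar : S → S) (a w z : List S) : Prop :=
  ∃ γ β : List S, w = γ ++ a ++ β ++ comp bar a ∧ z = w ++ comp bar γ

/-- Left hairpin completion w.r.t. primer `a`. -/
def LH (bar : S → S) (a w z : List S) : Prop :=
  ∃ γ β : List S, w = a ++ β ++ comp bar a ++ comp bar γ ∧ z = γ ++ w

/-- One hairpin completion step. -/
def HC (bar : S → S) (a w z : List S) : Prop := RH bar a w z ∨ LH bar a w z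

/-- Iterated hairpin completion `H*_α(w)`. -/
def HCstar (bar : S → S) (a w : List S) : Set (List S) :=
  { z | Relation.ReflTransGen (HC bar a) w z }

/-- `w` is non-`a`-crossing: every occurrence of `a` starts no later than
every occurrence of `comp bar a`. -/
def NonCrossing (bar : S → S) (a w : List S) : Prop :=
  ∀ i j : ℕ, a <+: w.drop i → comp bar a <+: w.drop j → i ≤ j

/-- The set of `a`-prefixes of `w`. -/
def Pa (a w : List S) : Set (List S) := { u | u ++ a <+: w }

/-- The set of `‾a`-suffixes of `w` (the elements are the words `‾v`). -/
def Sa (bar : S → S) (a w : List S) : Set (List S) :=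
  { x | comp bar a ++ x <:+ w }

/-- The set of complements of `‾a`-suffixes of `w`, i.e. `‾(S_‾α(w))`. -/
def barSa (bar : S → S) (a w : List S) : Set (List S) :=
  { v | comp bar a ++ comp bar v <:+ w }

/-- Kleene star of a set of words: all finite concatenations. -/
def star (X : Set (List S)) : Set (List S) :=
  { x | ∃ l : List (List S), (∀ y ∈ l, y ∈ X) ∧ x = l.flatten }

/-- `ind_α(x)`: the number of occurrences of `a` in `x ++ a` other than the
suffix occurrence, i.e. the number of positions `i < |x|` where `a` occurs. -/
def inda (a x : List S) : ℕ :=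
  ((Finset.range x.length).filter (fun i => a <+: (x ++ a).drop i)).card

section
omit [DecidableEq S]

theorem comp_append (bar : S → S) (x y : List S) :
    comp bar (x ++ y) = comp bar y ++ comp bar x := by
  simp [comp]

@[simp] theorem length_comp (bar : S → S) (x : List S) : (comp bar x).length = x.length := by
  simp [comp]

theorem comp_comp {bar : S → S} (hbar : Function.Involutive bar) (x : List S) :
    comp bar (comp bar x) = x := by
  simp [comp, hbar.comp_self]

theorem getElem?_comp (bar : S → S) (x : List S) {k : ℕ} (hk : k < x.length) :
    (comp bar x)[k]? = x[x.length - 1 - k]?.map bar := by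
  rw [comp, List.getElem?_reverse (by simpa using hk)]
  simp

theorem suffix_comp_of_prefix (bar : S → S) {x y : List S} (h : x <+: y) :
    comp bar x <:+ comp bar y :=
  List.reverse_suffix.mpr (h.map bar)

theorem exists_eq_append_append_of_prefix_of_suffix {x y z : List S} (hx : x <+: z)
    (hy : y <:+ z) (hlen : x.length + y.length ≤ z.length) : ∃ β, z = x ++ β ++ y := by
  obtain ⟨t, rfl⟩ := hy
  obtain ⟨β, rfl⟩ := List.prefix_of_prefix_length_le hx (List.prefix_append t y)
    (by simp only [List.length_append] at hlen; omega)
  exact ⟨β, rfl⟩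

/-! `pat <+: x.drop i` says that `pat` occurs in `x` at position `i`, as in `NonCrossing`. -/

theorem occ_iff_getElem? {pat x : List S} {i : ℕ} :
    pat <+: x.drop i ↔ ∀ k < pat.length, x[i + k]? = pat[k]? := by
  simp only [List.prefix_iff_getElem?, List.getElem?_drop]
  exact forall₂_congr fun k hk => by rw [List.getElem?_eq_getElem hk]

theorem getElem?_eq_of_prefix {x y : List S} (h : x <+: y) {k : ℕ} (hk : k < x.length) :
    y[k]? = x[k]? := by
  rw [List.getElem?_eq_getElem hk, List.prefix_iff_getElem?.mp h k hk]

theorem occ_of_append_prefix {x y z : List S} (h : x ++ y <+: z) : y <+: z.drop x.length := by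
  simpa using h.drop x.length

theorem occ_of_suffix {y z : List S} (h : y <:+ z) : y <+: z.drop (z.length - y.length) := by
  obtain ⟨t, rfl⟩ := h
  simp

theorem add_length_le_of_occ {pat x : List S} {i : ℕ} (hpat : 0 < pat.length)
    (h : pat <+: x.drop i) :
    i + pat.length ≤ x.length := by
  have := h.length_le
  rw [List.length_drop] at this
  omega

theorem occ_of_occ_of_prefix {pat y x : List S} {s t : ℕ} (hy : y <+: x.drop s)
    (h : pat <+: x.drop (s + t)) (hlen : t + pat.length ≤ y.length) : pat <+: y.drop t := by
  rw [occ_iff_getElem?] at h ⊢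
  intro k hk
  rw [← h k hk, ← occ_iff_getElem?.mp hy (t + k) (by omega), add_assoc]

theorem occ_of_occ_append_left {pat x y : List S} {i : ℕ} (h : pat <+: (x ++ y).drop i)
    (hlen : i + pat.length ≤ x.length) : pat <+: x.drop i := by
  simpa using occ_of_occ_of_prefix (s := 0) (x := x ++ y) (by simp) (by simpa using h) hlen

theorem occ_of_occ_append_right {pat x y : List S} {i : ℕ} (h : pat <+: (x ++ y).drop i)
    (hlen : x.length ≤ i) : pat <+: y.drop (i - x.length) := by
  rwa [List.drop_append, List.drop_eq_nil_of_le hlen, List.nil_append] at h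

theorem occ_trans {pat y x : List S} {s t : ℕ} (h : pat <+: y.drop t) (hy : y <+: x.drop s) :
    pat <+: x.drop (s + t) := by
  simpa [List.drop_drop] using h.trans (hy.drop t)

theorem occ_comp (bar : S → S) {pat x : List S} {i : ℕ} (h : pat <+: x.drop i)
    (hlen : i + pat.length ≤ x.length) :
    comp bar pat <+: (comp bar x).drop (x.length - i - pat.length) := by
  obtain ⟨t, ht⟩ := h
  have hx : x = x.take i ++ pat ++ t := by
    rw [List.append_assoc, ht, List.take_append_drop]
  have ht : t.length = x.length - i - pat.length := by
    have := congrArg List.length hx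
    simp only [List.length_append, List.length_take] at this
    omega
  rw [← ht, hx, comp_append, comp_append, ← length_comp bar t, List.drop_left]
  exact List.prefix_append _ _

theorem occ_shift {pat x : List S} {q p : ℕ} (h : pat <+: x.drop (q + p))
    (hper : ∀ k < pat.length, x[q + k + p]? = x[q + k]?) : pat <+: x.drop q := by
  rw [occ_iff_getElem?] at h ⊢
  intro k hk
  rw [← hper k hk, ← h k hk]
  congr 1
  omega

theorem NonCrossing.ne_nil {bar : S → S} {a x : List S} (h : NonCrossing bar a x) : a ≠ [] := by
  rintro rfl
  have := h 1 0 List.nil_prefix List.nil_prefix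
  omega

theorem nonCrossing_comp {bar : S → S} (hbar : Function.Involutive bar) {a x : List S}
    (h : NonCrossing bar a x) : NonCrossing bar a (comp bar x) := by
  have hla : 0 < a.length := List.length_pos_iff.mpr h.ne_nil
  intro i j hi hj
  have hi' := add_length_le_of_occ hla hi
  have hj' := add_length_le_of_occ (by simpa using hla) hj
  have hia := occ_comp bar hi hi'
  have hja := occ_comp bar hj hj'
  simp only [comp_comp hbar] at hia hja
  have := h _ _ hja hia
  simp only [length_comp] at *
  omega

theorem nonCrossing_comp_iff {bar : S → S} (hbar : Function.Involutive bar) {a x : List S} :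
    NonCrossing bar a (comp bar x) ↔ NonCrossing bar a x :=
  ⟨fun h => comp_comp hbar x ▸ nonCrossing_comp hbar h, nonCrossing_comp hbar⟩

theorem NonCrossing.append_comp {bar : S → S} (hbar : Function.Involutive bar) {a z γ : List S}
    (hz : NonCrossing bar a z) (hγ : γ ++ a <+: z) (hs : comp bar a <:+ z) :
    NonCrossing bar a (z ++ comp bar γ) := by
  have hla : 0 < a.length := List.length_pos_iff.mpr hz.ne_nil
  have hγa : a <+: z.drop γ.length := occ_of_append_prefix hγ
  have hlast : comp bar a <+: z.drop (z.length - a.length) := by simpa using occ_of_suffix hs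
  -- an occurrence of `a` reaching into `comp γ` lies in `comp (γ ++ a)`, a suffix of
  -- `z ++ comp γ`, and so reflects to an occurrence of `comp a` in `γ ++ a` left of `γ.length`
  have hinside : ∀ i, a <+: (z ++ comp bar γ).drop i → i + a.length ≤ z.length := by
    intro i hi
    by_contra hout
    obtain ⟨z', hz'⟩ := hs
    have hlen := add_length_le_of_occ hla hi
    have hz'len : z'.length + a.length = z.length := by simp [← hz']
    rw [← hz', List.append_assoc, ← comp_append] at hi
    have hi' := occ_of_occ_append_right hi (by omega)
    have hrefl := occ_comp bar hi'
      (by simp only [List.length_append, length_comp] at hlen ⊢; omega)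
    rw [comp_comp hbar] at hrefl
    have := hz _ _ hγa (hrefl.trans (hγ.drop _))
    simp only [length_comp, List.length_append] at this hlen
    omega
  intro i j hi hj
  have hiz : a <+: z.drop i := occ_of_occ_append_left hi (hinside i hi)
  by_cases hjz : j + (comp bar a).length ≤ z.length
  · exact hz i j hiz (occ_of_occ_append_left hj hjz)
  · have := hz i _ hiz hlast
    simp only [length_comp, not_le] at hjz
    omega

theorem NonCrossing.of_hc {bar : S → S} (hbar : Function.Involutive bar) {a x y : List S}
    (hx : NonCrossing bar a x) (hxy : HC bar a x y) : NonCrossing bar a y := by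
  rcases hxy with ⟨γ, β, rfl, rfl⟩ | ⟨γ, β, rfl, rfl⟩
  · exact hx.append_comp hbar (by simp [List.append_assoc]) (List.suffix_append _ _)
  · have hcomp : comp bar (a ++ β ++ comp bar a ++ comp bar γ)
        = γ ++ a ++ comp bar β ++ comp bar a := by
      simp only [comp_append, comp_comp hbar, List.append_assoc]
    rw [← nonCrossing_comp_iff hbar, comp_append]
    refine (nonCrossing_comp hbar hx).append_comp hbar ?_ ?_ <;> rw [hcomp]
    · simp [List.append_assoc]
    · exact List.suffix_append _ _

theorem NonCrossing.of_mem_hcstar {bar : S → S} (hbar : Function.Involutive bar)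
    {a x y : List S} (hx : NonCrossing bar a x) (hy : y ∈ HCstar bar a x) :
    NonCrossing bar a y := by
  induction hy with
  | refl => exact hx
  | tail _ hstep ih => exact ih.of_hc hbar hstep

theorem infix_of_mem_hcstar {bar : S → S} {a x y : List S} (hy : y ∈ HCstar bar a x) :
    x <:+: y := by
  induction hy with
  | refl => exact List.infix_refl x
  | tail _ hstep ih =>
    refine ih.trans ?_
    rcases hstep with ⟨γ, β, -, rfl⟩ | ⟨γ, β, -, rfl⟩
    · exact (List.prefix_append _ _).isInfix
    · exact (List.suffix_append _ _).isInfix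

theorem NonCrossing.occ_unique {bar : S → S} {a w x : List S} (hx : NonCrossing bar a x)
    (hp : a <+: w) (hs : comp bar a <:+ w) {p₁ p₂ : ℕ}
    (h₁ : w <+: x.drop p₁) (h₂ : w <+: x.drop p₂) : p₁ = p₂ := by
  classical
  have hla : 0 < (comp bar a).length := by simpa using List.length_pos_iff.mpr hx.ne_nil
  suffices hlt : ∀ {p₁ p₂}, w <+: x.drop p₁ → w <+: x.drop p₂ → ¬ p₁ < p₂ by
    have := hlt h₁ h₂
    have := hlt h₂ h₁
    omega
  intro p₁ p₂ h₁ h₂ h₁₂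
  have hex : ∃ r, comp bar a <+: w.drop r := ⟨_, occ_of_suffix hs⟩
  have hr := Nat.find_spec hex
  have hrlen := add_length_le_of_occ hla hr
  have hp₂r := hx p₂ _ (hp.trans h₂) (occ_trans hr h₁)
  have hshift : comp bar a <+: w.drop (Nat.find hex - (p₂ - p₁)) := by
    refine occ_of_occ_of_prefix h₂ ?_ (by omega)
    rw [show p₂ + (Nat.find hex - (p₂ - p₁)) = p₁ + Nat.find hex by omega]
    exact occ_trans hr h₁
  exact Nat.find_min hex (by omega) hshift

def HasPeriod (x : List S) (p : ℕ) : Prop :=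
  ∀ k, k + p < x.length → x[k + p]? = x[k]?

theorem hasPeriod_of_prefix_of_prefix {a w U : List S} (hp : a <+: w) (hU : U ++ a <+: w) :
    HasPeriod a U.length := by
  intro k hk
  rw [← occ_iff_getElem?.mp (occ_of_append_prefix hU) k (by omega),
    ← getElem?_eq_of_prefix hp hk, add_comm]

theorem HasPeriod.comp (bar : S → S) {a : List S} {p : ℕ} (h : HasPeriod a p) :
    HasPeriod (Hairpin.comp bar a) p := by
  intro k hk
  rw [length_comp] at hk
  rw [getElem?_comp bar a hk, getElem?_comp bar a (by omega),
    show a.length - 1 - k = a.length - 1 - (k + p) + p by omega, h _ (by omega)]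

-- `U ++ a` at `T.length` and the final `comp a` overlap in at least `U.length` letters,
-- and both have period `U.length`
theorem getElem?_add_eq_of_overlap {bar : S → S} {a w U T : List S} (hp : a <+: w)
    (hs : comp bar a <:+ w) (hU : U ++ a <+: w) (hTU : T ++ U ++ a <+: w)
    (hover : w.length ≤ T.length + 2 * a.length) :
    ∀ ξ, T.length ≤ ξ → ξ + U.length < w.length → w[ξ + U.length]? = w[ξ]? := by
  have haTU : ∀ k < a.length, w[T.length + U.length + k]? = a[k]? := by
    simpa using occ_iff_getElem?.mp (occ_of_append_prefix hTU)
  have hca : ∀ k < a.length, w[w.length - a.length + k]? = (comp bar a)[k]? := by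
    simpa using occ_iff_getElem?.mp (occ_of_suffix hs)
  have hUT : ∀ k < U.length, w[T.length + k]? = w[k]? := by
    have hT := occ_iff_getElem?.mp (occ_of_append_prefix ((List.prefix_append _ a).trans hTU))
    intro k hk
    rw [hT k hk, getElem?_eq_of_prefix ((List.prefix_append U a).trans hU) hk]
  have ha_per := hasPeriod_of_prefix_of_prefix hp hU
  intro ξ hTξ hξw
  by_cases hξ : ξ < T.length + a.length
  · obtain ⟨η, rfl⟩ := Nat.exists_eq_add_of_le hTξ
    rw [show T.length + η + U.length = T.length + U.length + η by omega, haTU η (by omega)]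
    by_cases hη : η < U.length
    · rw [hUT η hη, getElem?_eq_of_prefix hp (by omega)]
    · rw [show T.length + η = T.length + U.length + (η - U.length) by omega,
        haTU _ (by omega), ← ha_per (η - U.length) (by omega), Nat.sub_add_cancel (by omega)]
  · obtain ⟨y, rfl⟩ := Nat.exists_eq_add_of_le (show w.length - a.length ≤ ξ by omega)
    rw [add_assoc, hca _ (by omega), hca _ (by omega),
      ha_per.comp bar _ (by rw [length_comp]; omega)]

theorem NonCrossing.length_add_two_mul_lt {bar : S → S} {a w U V : List S}
    (hnc : NonCrossing bar a w) (hp : a <+: w) (hs : comp bar a <:+ w)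
    (hU : U ++ a <+: w) (hV : V ++ a <+: w) (hUne : U ≠ []) (hUV : U <:+ V) :
    V.length + 2 * a.length < w.length + U.length := by
  classical
  obtain ⟨T, rfl⟩ := hUV
  have hla : 0 < (comp bar a).length := by simpa using List.length_pos_iff.mpr hnc.ne_nil
  have hpos : 0 < U.length := List.length_pos_iff.mpr hUne
  by_contra! hover
  rw [List.length_append] at hover
  have hper := getElem?_add_eq_of_overlap hp hs hU hV (by omega)
  have hex : ∃ r, comp bar a <+: w.drop r := ⟨_, occ_of_suffix hs⟩
  have hr := Nat.find_spec hex
  have hrlen := add_length_le_of_occ hla hr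
  have hVr := hnc _ _ (occ_of_append_prefix hV) hr
  rw [List.length_append] at hVr
  have hshift : comp bar a <+: w.drop (Nat.find hex - U.length) :=
    occ_shift (by rwa [Nat.sub_add_cancel (by omega)]) fun k hk => hper _ (by omega) (by omega)
  exact Nat.find_min hex (by omega) hshift

theorem rh_append_comp {bar : S → S} {a w U T : List S}
    (hnc : NonCrossing bar a w) (hp : a <+: w) (hs : comp bar a <:+ w)
    (hU : U ++ a <+: w) (hTU : T ++ U ++ a <+: w) (hUne : U ≠ []) :
    RH bar a (w ++ comp bar U) (w ++ comp bar (T ++ U)) := by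
  have hlen := hnc.length_add_two_mul_lt hp hs hU hTU hUne (List.suffix_append T U)
  have haU : a <+: U ++ a := List.prefix_of_prefix_length_le hp hU (by simp)
  have hTa : T ++ a <+: w ++ comp bar U := by
    rw [← List.prefix_append_right_inj T, ← List.append_assoc] at haU
    exact haU.trans (hTU.trans (List.prefix_append w _))
  have hsuf : comp bar a <:+ w ++ comp bar U := by
    have := suffix_comp_of_prefix bar haU
    rw [comp_append] at this
    exact this.trans (List.suffix_append_self_iff.mpr hs)
  obtain ⟨β, hβ⟩ := exists_eq_append_append_of_prefix_of_suffix hTa hsuf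
    (by simp only [List.length_append, length_comp] at hlen ⊢; omega)
  exact ⟨T, β, hβ, by rw [comp_append, List.append_assoc]⟩

theorem suffix_of_mem_hcstar_inter {bar : S → S} (hbar : Function.Involutive bar)
    {a w U V z : List S} (hnc : NonCrossing bar a w) (hp : a <+: w) (hs : comp bar a <:+ w)
    (hU : U ++ a <+: w) (hlen : U.length ≤ V.length)
    (hzU : z ∈ HCstar bar a (w ++ comp bar U)) (hzV : z ∈ HCstar bar a (w ++ comp bar V)) :
    U <:+ V := by
  have hz := (hnc.append_comp hbar hU hs).of_mem_hcstar hbar hzU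
  obtain ⟨l₁, r₁, rfl⟩ := infix_of_mem_hcstar hzU
  obtain ⟨l₂, r₂, h⟩ := infix_of_mem_hcstar hzV
  simp only [List.append_assoc] at h
  have hl := hz.occ_unique hp hs (occ_of_append_prefix (by simp : l₁ ++ w <+: _))
    (occ_of_append_prefix (show l₂ ++ w <+: l₁ ++ (w ++ comp bar U) ++ r₁ by
      simp only [List.append_assoc]; rw [← h]; simp))
  have hcomp := List.append_cancel_left (List.append_inj h hl.symm).2
  have hpre : comp bar U <+: comp bar V :=
    List.prefix_of_prefix_length_le ⟨r₁, rfl⟩ ⟨r₂, hcomp⟩ (by simpa using hlen)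
  simpa [comp_comp hbar] using suffix_comp_of_prefix bar hpre

end

theorem stmt18_general (bar : S → S) (hbar : Function.Involutive bar)
    (a w : List S)
    (hp : a <+: w) (hs : comp bar a <:+ w)
    (hnc : NonCrossing bar a w) (m : ℕ) (u : Fin m → List S)
    (huchain : ∀ i j : Fin m, i < j → u i <+: u j ∧ u i ≠ u j)
    (hPu : Pa a w = Set.range u)
    (i j : Fin m) (hi : 1 ≤ (i : ℕ)) (hij : i < j) :
    (u i <:+ u j →
      HCstar bar a (w ++ comp bar (u j)) ⊆ HCstar bar a (w ++ comp bar (u i))) ∧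
    (¬ u i <:+ u j →
      HCstar bar a (w ++ comp bar (u i)) ∩ HCstar bar a (w ++ comp bar (u j)) = ∅) := by
  have hu : ∀ k, u k ++ a <+: w := fun k => (hPu ▸ Set.mem_range_self k : u k ∈ Pa a w)
  have hui : u i ≠ [] := by
    obtain ⟨h0i, hne⟩ := huchain ⟨0, by omega⟩ i (Fin.lt_def.mpr (by simp; omega))
    rintro h
    exact hne (by rw [h] at h0i ⊢; exact List.prefix_nil.mp h0i)
  constructor
  · rintro ⟨T, hT⟩ z hz
    have hstep := rh_append_comp hnc hp hs (hu i) (hT ▸ hu j) hui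
    rw [hT] at hstep
    exact Relation.ReflTransGen.head (Or.inl hstep) hz
  · intro hnsuf
    refine Set.eq_empty_of_forall_notMem fun z ⟨hzi, hzj⟩ => hnsuf ?_
    exact suffix_of_mem_hcstar_inter hbar hnc hp hs (hu i) (huchain i j hij).1.length_le hzi hzj

theorem stmt18 (bar : S → S) (hbar : Function.Involutive bar)
    (a w : List S) (ha : a ≠ comp bar a)
    (hp : a <+: w) (hs : comp bar a <:+ w)
    (hnc : NonCrossing bar a w) (m : ℕ) (u : Fin m → List S)
    (huchain : ∀ i j : Fin m, i < j → u i <+: u j ∧ u i ≠ u j)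
    (hPu : Pa a w = Set.range u)
    (n : ℕ) (v : Fin n → List S)
    (hvchain : ∀ i j : Fin n, i < j → comp bar (v i) <:+ comp bar (v j) ∧ v i ≠ v j)
    (hSv : Sa bar a w = Set.range (fun i => comp bar (v i)))
    (hm : 2 ≤ m) (hn : 2 ≤ n)
    (i j : Fin m) (hi : 1 ≤ (i : ℕ)) (hij : i < j) :
    (u i <:+ u j →
      HCstar bar a (w ++ comp bar (u j)) ⊆ HCstar bar a (w ++ comp bar (u i))) ∧
    (¬ u i <:+ u j →
      HCstar bar a (w ++ comp bar (u i)) ∩ HCstar bar a (w ++ comp bar (u j)) = ∅) :=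
  stmt18_general bar hbar a w hp hs hnc m u huchain hPu i j hi hij

end Hairpin
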